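/- For any unit vector $|\psi\rangle \in \mathbb{C}^{2^n}$ and any Lagrangian subspace $T \subset \mathbb{F}_2^{2n}$, the stabilizer fidelity satisfies $\mathcal{F}_{\mathcal{S}}(|\psi\rangle) := \max_{|\phi\rangle \in \mathrm{Stab}} |\langle\phi|\psi\rangle|^2 \ge \sum_{x\in T} p_\Psi(x)$, where $p_\Psi(x) = 2^{-n}|\langle\psi|W_x|\psi\rangle|^2$. -/

import Mathlib

open Matrix Finset Complex

/-- Integer-valued dot product of two `𝔽₂` vectors. -/
def dotVal {n : ℕ} (a b : Fin n → ZMod 2) : ℕ := ∑ j, (a j * b j).val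

/-- The `n`-qubit Weyl (Pauli) operator `W_{(a,b)} = i^{a·b} ⊗_j X^{a_j} Z^{b_j}`. -/
def Weyl (n : ℕ) (a b : Fin n → ZMod 2) :
    Matrix (Fin n → ZMod 2) (Fin n → ZMod 2) ℂ :=
  fun x y => if x = a + y then Complex.I ^ dotVal a b * (-1 : ℂ) ^ dotVal b y else 0

/-- An `n`-qubit stabilizer state: a unit vector stabilized by a stabilizer group, i.e.,
a set of `2^n` commuting signed Weyl operators indexed by a Lagrangian subspace. -/
def IsStabilizerState (n : ℕ) (φ : (Fin n → ZMod 2) → ℂ) : Prop :=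
  (∑ v, ‖φ v‖ ^ 2 = 1) ∧
  ∃ T : Finset ((Fin n → ZMod 2) × (Fin n → ZMod 2)),
    ∃ ε : ((Fin n → ZMod 2) × (Fin n → ZMod 2)) → ℂ,
      T.card = 2 ^ n ∧
      (0 : (Fin n → ZMod 2) × (Fin n → ZMod 2)) ∈ T ∧
      (∀ x ∈ T, ∀ y ∈ T, x + y ∈ T) ∧
      (∀ x ∈ T, ∀ y ∈ T, (dotVal x.1 y.2 + dotVal y.1 x.2) % 2 = 0) ∧
      (∀ x, ε x = 1 ∨ ε x = -1) ∧
      (∀ x ∈ T, ∀ y ∈ T,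
        ε (x + y) • Weyl n (x + y).1 (x + y).2 =
          (ε x * ε y) • (Weyl n x.1 x.2 * Weyl n y.1 y.2)) ∧
      (∀ x ∈ T, Matrix.mulVec (ε x • Weyl n x.1 x.2) φ = φ)

/-!
The Weyl operators `W_x`, `x ∈ T`, are commuting Hermitian involutions, and multiplying them by
their eigenvalues on a common eigenvector gives signs `ε` for which `x ↦ ε x • W_x` is a
representation of `T`. For each character `χ`, `P_χ = |T|⁻¹ ∑_{x ∈ T} χ x ε x W_x` (`twirl`) is
the orthogonal projection onto a joint eigenspace, and `⟨ψ, P_χ ψ⟩ = |T|⁻¹ ∑_x χ x t_x` with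
`t_x = ⟨ψ, ε x W_x ψ⟩` real. Orthogonality of characters gives `∑_χ ⟨ψ, P_χ ψ⟩ = 4ⁿ / |T|` and
`∑_χ ⟨ψ, P_χ ψ⟩² = 4ⁿ / |T|² ∑_x |t_x|²`, so the largest `⟨ψ, P_χ ψ⟩` is at least
`|T|⁻¹ ∑_x |t_x|²`, and the normalisation of that `P_χ ψ` is the required stabilizer state.
-/

lemma neg_one_pow_eq_of_natCast_eq {R : Type*} [Ring R] {j k : ℕ} (h : (j : ZMod 2) = k) :
    (-1 : R) ^ j = (-1) ^ k := by
  rw [neg_one_pow_eq_pow_mod_two, neg_one_pow_eq_pow_mod_two (n := k),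
    (ZMod.natCast_eq_natCast_iff' j k 2).1 h]

lemma I_pow_mul_self (k : ℕ) : I ^ k * I ^ k = (-1) ^ k := by
  rw [← mul_pow, I_mul_I]

lemma ZModModule.add_eq_iff_eq_add {G : Type*} [AddCommGroup G] [Module (ZMod 2) G]
    {a x z : G} : a + x = z ↔ x = a + z := by
  constructor <;> rintro rfl <;> rw [← add_assoc, ZModModule.add_self, zero_add]

lemma Matrix.trace_mul_vecMulVec {α R : Type*} [Fintype α] [CommSemiring R]
    (A : Matrix α α R) (u v : α → R) : (A * vecMulVec u v).trace = v ⬝ᵥ (A *ᵥ u) := by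
  rw [mul_vecMulVec, trace_vecMulVec, dotProduct_comm]

theorem Matrix.exists_common_eigenvector_of_commute_of_mul_self_eq_one {K α ι : Type*} [Field K]
    [NeZero (2 : K)] [Fintype α] [DecidableEq α] [Nonempty α] (M : ι → Matrix α α K)
    (S : Finset ι) (hinv : ∀ i ∈ S, M i * M i = 1)
    (hcomm : ∀ i ∈ S, ∀ j ∈ S, Commute (M i) (M j)) :
    ∃ v : α → K, v ≠ 0 ∧
      ∃ s : ι → K, (∀ i, s i = 1 ∨ s i = -1) ∧ ∀ i ∈ S, M i *ᵥ v = s i • v := by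
  classical
  induction S using Finset.induction_on with
  | empty =>
    exact ⟨fun _ => 1, fun h => one_ne_zero (congrFun h (Classical.arbitrary α)),
      fun _ => 1, fun _ => Or.inl rfl, by simp⟩
  | insert i S hi ih =>
    obtain ⟨v, hv, s, hs, hsv⟩ := ih (fun j hj => hinv j (mem_insert_of_mem hj))
      (fun j hj k hk => hcomm j (mem_insert_of_mem hj) k (mem_insert_of_mem hk))
    -- `v ± M i v` is a `±1`-eigenvector of the involution `M i` and stays in the old eigenspaces.
    have key : ∀ σ : K, σ * σ = 1 → v + σ • (M i *ᵥ v) ≠ 0 → ∃ w : α → K, w ≠ 0 ∧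
        ∃ s : ι → K, (∀ i, s i = 1 ∨ s i = -1) ∧ ∀ j ∈ insert i S, M j *ᵥ w = s j • w := by
      intro σ hσ hne
      refine ⟨_, hne, Function.update s i σ, fun j => ?_, fun j hj => ?_⟩
      · rcases eq_or_ne j i with rfl | hj
        · rw [Function.update_self]; exact mul_self_eq_one_iff.1 hσ
        · rw [Function.update_of_ne hj]; exact hs j
      rcases mem_insert.1 hj with rfl | hjS
      · rw [Function.update_self, mulVec_add, mulVec_smul, mulVec_mulVec, hinv j hj,
          one_mulVec, smul_add, smul_smul, hσ, one_smul, add_comm]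
      · rw [Function.update_of_ne (ne_of_mem_of_not_mem hjS hi), mulVec_add, mulVec_smul,
          mulVec_mulVec, (hcomm j hj i (mem_insert_self i S)).eq, ← mulVec_mulVec, hsv j hjS,
          mulVec_smul]
        module
    by_cases hplus : v + (1 : K) • (M i *ᵥ v) = 0
    · refine key (-1) (by norm_num) fun hminus => hv ?_
      have h2v : (2 : K) • v = (v + (1 : K) • (M i *ᵥ v)) + (v + (-1 : K) • (M i *ᵥ v)) := by
        module
      rw [hplus, hminus, add_zero] at h2v
      exact (smul_eq_zero.1 h2v).resolve_left two_ne_zero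
    · exact key 1 (one_mul 1) hplus

theorem Matrix.smul_mul_smul_eq_smul_of_mulVec_eq {K α : Type*} [Field K] [Fintype α]
    {A B C : Matrix α α K} {ω : K} (hABC : A * B = ω • C) {v : α → K} (hv : v ≠ 0)
    {a b c : K} (hA : A *ᵥ v = a • v) (hB : B *ᵥ v = b • v) (hC : C *ᵥ v = c • v)
    (ha : a * a = 1) (hb : b * b = 1) (hc : c * c = 1) :
    (a • A) * (b • B) = c • C := by
  have hab : a * b = ω * c := smul_left_injective K hv <| calc
    (a * b) • v = A *ᵥ (B *ᵥ v) := by rw [hB, mulVec_smul, hA, smul_smul, mul_comm]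
    _ = (ω * c) • v := by rw [mulVec_mulVec, hABC, smul_mulVec, hC, smul_smul]
  rw [smul_mul_smul_comm, hABC, smul_smul]
  congr 1
  linear_combination (-(a * b * c)) * hab + c * b * b * ha + c * hb - a * b * ω * hc

section Twirl

variable {α ι : Type*}

lemma AddChar.mul_self_apply_of_zmodModule [AddCommGroup ι] [Module (ZMod 2) ι] {M : Type*}
    [Monoid M] (χ : AddChar ι M) (x : ι) : χ x * χ x = 1 := by
  rw [← AddChar.map_add_eq_mul, ZModModule.add_self, AddChar.map_zero_eq_one]

lemma AddChar.star_apply_of_zmodModule [AddCommGroup ι] [Module (ZMod 2) ι] [Finite ι]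
    (χ : AddChar ι ℂ) (x : ι) : star (χ x) = χ x := by
  rw [star_def, ← AddChar.map_neg_eq_conj, ZModModule.neg_eq_self]

lemma AddChar.sum_apply_mul_apply_of_zmodModule [AddCommGroup ι] [Module (ZMod 2) ι] [Fintype ι]
    [DecidableEq ι] (x y : ι) :
    ∑ χ : AddChar ι ℂ, χ x * χ y = if x = y then (Fintype.card ι : ℂ) else 0 := by
  simp_rw [← AddChar.map_add_eq_mul]
  simp only [AddChar.sum_apply_eq_ite, add_eq_zero_iff_eq_neg, ZModModule.neg_eq_self]

lemma Finset.sum_add_left_of_add_mem [AddCommGroup ι] [Module (ZMod 2) ι] {M : Type*}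
    [AddCommMonoid M] {T : Finset ι} (hT : ∀ x ∈ T, ∀ y ∈ T, x + y ∈ T) {x : ι} (hx : x ∈ T)
    (f : ι → M) : ∑ y ∈ T, f (x + y) = ∑ y ∈ T, f y :=
  Finset.sum_nbij' (x + ·) (x + ·) (fun y hy => hT x hx y hy) (fun y hy => hT x hx y hy)
    (fun y _ => by simp [← add_assoc, ZModModule.add_self])
    (fun y _ => by simp [← add_assoc, ZModModule.add_self]) (fun _ _ => rfl)

lemma Matrix.star_dotProduct_self_eq_sum_norm_sq [Fintype α] (u : α → ℂ) :
    star u ⬝ᵥ u = ((∑ i, ‖u i‖ ^ 2 : ℝ) : ℂ) := by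
  push_cast
  exact sum_congr rfl fun i _ => conj_mul' (u i)

lemma Matrix.IsHermitian.star_dotProduct_mulVec_sq [Fintype α] {A : Matrix α α ℂ}
    (hA : A.IsHermitian) (ψ : α → ℂ) :
    (star ψ ⬝ᵥ (A *ᵥ ψ)) ^ 2 = ((‖star ψ ⬝ᵥ (A *ᵥ ψ)‖ ^ 2 : ℝ) : ℂ) := by
  have hself : star (star ψ ⬝ᵥ (A *ᵥ ψ)) = star ψ ⬝ᵥ (A *ᵥ ψ) := by
    rw [← star_dotProduct, star_mulVec, ← dotProduct_mulVec, hA.eq]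
  rw [ofReal_pow, ← conj_mul', ← star_def, hself, sq]

lemma Matrix.IsHermitian.star_mulVec_dotProduct_mulVec_of_mul_self_eq [Fintype α]
    {P : Matrix α α ℂ} (hP : P.IsHermitian) (hPP : P * P = P) (ψ : α → ℂ) :
    star (P *ᵥ ψ) ⬝ᵥ (P *ᵥ ψ) = star (P *ᵥ ψ) ⬝ᵥ ψ := by
  rw [star_mulVec, ← dotProduct_mulVec, ← dotProduct_mulVec, mulVec_mulVec, hP.eq, hPP]

lemma exists_sum_sq_le_mul_sum {κ : Type*} [Fintype κ] [Nonempty κ] (q : κ → ℝ)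
    (hq : ∀ k, 0 ≤ q k) : ∃ k, ∑ j, q j ^ 2 ≤ q k * ∑ j, q j := by
  obtain ⟨k, hk⟩ := Finite.exists_max q
  refine ⟨k, ?_⟩
  rw [mul_sum]
  exact sum_le_sum fun j _ => by rw [sq]; exact mul_le_mul_of_nonneg_right (hk j) (hq j)

lemma exists_unit_vector_of_isHermitian_of_mul_self_eq [Fintype α] {P : Matrix α α ℂ}
    (hP : P.IsHermitian) (hPP : P * P = P) (ψ : α → ℂ) (hpos : 0 < ∑ i, ‖(P *ᵥ ψ) i‖ ^ 2) :
    ∃ φ : α → ℂ, star φ ⬝ᵥ φ = 1 ∧ P *ᵥ φ = φ ∧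
      ‖star φ ⬝ᵥ ψ‖ ^ 2 = ∑ i, ‖(P *ᵥ ψ) i‖ ^ 2 := by
  set q := ∑ i, ‖(P *ᵥ ψ) i‖ ^ 2
  have hq : star (P *ᵥ ψ) ⬝ᵥ (P *ᵥ ψ) = q := star_dotProduct_self_eq_sum_norm_sq _
  have hqψ : star (P *ᵥ ψ) ⬝ᵥ ψ = q := by
    rw [← hP.star_mulVec_dotProduct_mulVec_of_mul_self_eq hPP, hq]
  have hsqrt : (Real.sqrt q : ℂ) ≠ 0 := by exact_mod_cast (Real.sqrt_pos.2 hpos).ne'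
  have hsq : (Real.sqrt q : ℂ) * Real.sqrt q = q := by exact_mod_cast Real.mul_self_sqrt hpos.le
  have hstar : star ((Real.sqrt q : ℂ)⁻¹) = (Real.sqrt q : ℂ)⁻¹ := by
    rw [star_inv₀, star_def, conj_ofReal]
  refine ⟨(Real.sqrt q : ℂ)⁻¹ • (P *ᵥ ψ), ?_, ?_, ?_⟩
  · rw [star_smul, smul_dotProduct, dotProduct_smul, hq, hstar, smul_eq_mul, smul_eq_mul, ← hsq]
    field_simp
  · rw [mulVec_smul, mulVec_mulVec, hPP]
  · rw [star_smul, smul_dotProduct, hqψ, hstar, smul_eq_mul, ← hsq, inv_mul_cancel_left₀ hsqrt,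
      norm_real, Real.norm_of_nonneg (Real.sqrt_nonneg _), Real.sq_sqrt hpos.le]

/-- For a representation `η` of `T`, the projection onto the joint eigenspace on which each `η x`
acts as `χ x`. -/
noncomputable def twirl [AddMonoid ι] (T : Finset ι) (η : ι → Matrix α α ℂ) (χ : AddChar ι ℂ) :
    Matrix α α ℂ :=
  (#T : ℂ)⁻¹ • ∑ x ∈ T, χ x • η x

lemma smul_mul_twirl [Fintype α] [AddCommGroup ι] [Module (ZMod 2) ι] {T : Finset ι}
    (hT : ∀ x ∈ T, ∀ y ∈ T, x + y ∈ T) {η : ι → Matrix α α ℂ}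
    (hη : ∀ x ∈ T, ∀ y ∈ T, η x * η y = η (x + y)) {x : ι} (hx : x ∈ T) (χ : AddChar ι ℂ) :
    (χ x • η x) * twirl T η χ = twirl T η χ := by
  rw [twirl, mul_smul_comm, mul_sum]
  congr 1
  calc ∑ y ∈ T, (χ x • η x) * (χ y • η y) = ∑ y ∈ T, χ (x + y) • η (x + y) :=
        sum_congr rfl fun y hy => by
          rw [smul_mul_smul_comm, hη x hx y hy, AddChar.map_add_eq_mul]
    _ = ∑ y ∈ T, χ y • η y := sum_add_left_of_add_mem hT hx fun y => χ y • η y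

lemma twirl_mul_self [Fintype α] [AddCommGroup ι] [Module (ZMod 2) ι] {T : Finset ι}
    (hT0 : 0 ∈ T) (hT : ∀ x ∈ T, ∀ y ∈ T, x + y ∈ T) {η : ι → Matrix α α ℂ}
    (hη : ∀ x ∈ T, ∀ y ∈ T, η x * η y = η (x + y)) (χ : AddChar ι ℂ) :
    twirl T η χ * twirl T η χ = twirl T η χ := by
  have hcard : (#T : ℂ) ≠ 0 := by exact_mod_cast (card_pos.2 ⟨0, hT0⟩).ne'
  nth_rewrite 1 [twirl]
  rw [smul_mul_assoc, sum_mul, sum_congr rfl fun x hx => smul_mul_twirl hT hη hx χ, sum_const,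
    ← Nat.cast_smul_eq_nsmul ℂ, smul_smul, inv_mul_cancel₀ hcard, one_smul]

lemma twirl_isHermitian [AddCommGroup ι] [Module (ZMod 2) ι] [Finite ι] {T : Finset ι}
    {η : ι → Matrix α α ℂ} (hherm : ∀ x ∈ T, (η x).IsHermitian) (χ : AddChar ι ℂ) :
    (twirl T η χ).IsHermitian := by
  rw [IsHermitian, twirl, conjTranspose_smul, conjTranspose_sum, star_inv₀, star_natCast]
  congr 1
  exact sum_congr rfl fun x hx => by
    rw [conjTranspose_smul, (hherm x hx).eq, AddChar.star_apply_of_zmodModule]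

lemma star_dotProduct_twirl_mulVec [Fintype α] [AddMonoid ι] (T : Finset ι)
    (η : ι → Matrix α α ℂ) (χ : AddChar ι ℂ) (ψ : α → ℂ) :
    star ψ ⬝ᵥ (twirl T η χ *ᵥ ψ) = (#T : ℂ)⁻¹ * ∑ x ∈ T, χ x * (star ψ ⬝ᵥ (η x *ᵥ ψ)) := by
  simp only [twirl, smul_mulVec, sum_mulVec, dotProduct_smul, dotProduct_sum, smul_eq_mul]

lemma sum_star_dotProduct_twirl_mulVec [Fintype α] [AddCommGroup ι] [Fintype ι] [DecidableEq ι]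
    {T : Finset ι} (hT0 : 0 ∈ T) (η : ι → Matrix α α ℂ) (ψ : α → ℂ) :
    ∑ χ : AddChar ι ℂ, star ψ ⬝ᵥ (twirl T η χ *ᵥ ψ) =
      Fintype.card ι / #T * (star ψ ⬝ᵥ (η 0 *ᵥ ψ)) := by
  simp_rw [star_dotProduct_twirl_mulVec, ← mul_sum]
  rw [sum_comm]
  simp_rw [← sum_mul, AddChar.sum_apply_eq_ite, ite_mul, zero_mul]
  rw [sum_ite_eq' T 0, if_pos hT0]
  ring

lemma sum_star_dotProduct_twirl_mulVec_sq [Fintype α] [AddCommGroup ι] [Module (ZMod 2) ι]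
    [Fintype ι] [DecidableEq ι] (T : Finset ι) (η : ι → Matrix α α ℂ) (ψ : α → ℂ) :
    ∑ χ : AddChar ι ℂ, (star ψ ⬝ᵥ (twirl T η χ *ᵥ ψ)) ^ 2 =
      Fintype.card ι / #T ^ 2 * ∑ x ∈ T, (star ψ ⬝ᵥ (η x *ᵥ ψ)) ^ 2 := by
  have hexpand (χ : AddChar ι ℂ) : (star ψ ⬝ᵥ (twirl T η χ *ᵥ ψ)) ^ 2 = (#T : ℂ)⁻¹ ^ 2 *
      ∑ x ∈ T, ∑ y ∈ T, χ x * χ y * ((star ψ ⬝ᵥ (η x *ᵥ ψ)) * (star ψ ⬝ᵥ (η y *ᵥ ψ))) := by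
    rw [star_dotProduct_twirl_mulVec, mul_pow, sq (∑ x ∈ T, _), sum_mul_sum]
    congr 1
    exact sum_congr rfl fun x _ => sum_congr rfl fun y _ => by ring
  simp_rw [hexpand, ← mul_sum]
  rw [sum_comm, sum_congr rfl fun x _ => sum_comm]
  simp_rw [← sum_mul, AddChar.sum_apply_mul_apply_of_zmodModule, ite_mul, zero_mul, sum_ite_eq]
  rw [sum_congr rfl fun x hx => if_pos hx, ← mul_sum]
  simp_rw [sq]
  ring

lemma exists_addChar_sum_norm_sq_le_norm_sq_twirl_mulVec [Fintype α] [DecidableEq α]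
    [AddCommGroup ι] [Module (ZMod 2) ι] [Fintype ι] [DecidableEq ι] {T : Finset ι}
    (hT0 : 0 ∈ T) (hT : ∀ x ∈ T, ∀ y ∈ T, x + y ∈ T) {η : ι → Matrix α α ℂ} (hη0 : η 0 = 1)
    (hη : ∀ x ∈ T, ∀ y ∈ T, η x * η y = η (x + y)) (hherm : ∀ x ∈ T, (η x).IsHermitian)
    {ψ : α → ℂ} (hψ : star ψ ⬝ᵥ ψ = 1) :
    ∃ χ : AddChar ι ℂ, (#T : ℝ)⁻¹ * ∑ x ∈ T, ‖star ψ ⬝ᵥ (η x *ᵥ ψ)‖ ^ 2 ≤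
      ∑ i, ‖(twirl T η χ *ᵥ ψ) i‖ ^ 2 := by
  set Q : AddChar ι ℂ → ℝ := fun χ => ∑ i, ‖(twirl T η χ *ᵥ ψ) i‖ ^ 2
  set S := ∑ x ∈ T, ‖star ψ ⬝ᵥ (η x *ᵥ ψ)‖ ^ 2
  have hQ (χ : AddChar ι ℂ) : (Q χ : ℂ) = star ψ ⬝ᵥ (twirl T η χ *ᵥ ψ) := by
    rw [← star_dotProduct_self_eq_sum_norm_sq, star_mulVec, ← dotProduct_mulVec, mulVec_mulVec,
      (twirl_isHermitian hherm χ).eq, twirl_mul_self hT0 hT hη]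
  have hsum : ∑ χ, Q χ = Fintype.card ι / #T := ofReal_injective <| by
    push_cast
    simp_rw [hQ]
    rw [sum_star_dotProduct_twirl_mulVec hT0, hη0, one_mulVec, hψ, mul_one]
  have hsq : ∑ χ, Q χ ^ 2 = Fintype.card ι / #T ^ 2 * S := ofReal_injective <| by
    push_cast [S]
    simp_rw [hQ]
    rw [sum_star_dotProduct_twirl_mulVec_sq, sum_congr rfl fun x hx =>
      (hherm x hx).star_dotProduct_mulVec_sq ψ]
    push_cast
    rfl
  obtain ⟨χ, hχ⟩ := exists_sum_sq_le_mul_sum Q fun χ => by positivity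
  rw [hsum, hsq] at hχ
  have hT_pos : (0 : ℝ) < #T := by exact_mod_cast card_pos.2 ⟨0, hT0⟩
  have hι_pos : (0 : ℝ) < Fintype.card ι := by exact_mod_cast Fintype.card_pos
  refine ⟨χ, le_of_mul_le_mul_left ?_ (div_pos hι_pos hT_pos)⟩
  calc Fintype.card ι / #T * ((#T : ℝ)⁻¹ * S) = Fintype.card ι / #T ^ 2 * S := by ring
    _ ≤ Q χ * (Fintype.card ι / #T) := hχ
    _ = Fintype.card ι / #T * Q χ := mul_comm _ _

theorem exists_addChar_fixed_unit_vector_sum_norm_sq_le [Fintype α] [DecidableEq α]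
    [AddCommGroup ι] [Module (ZMod 2) ι] [Fintype ι] [DecidableEq ι] {T : Finset ι}
    (hT0 : 0 ∈ T) (hT : ∀ x ∈ T, ∀ y ∈ T, x + y ∈ T) {η : ι → Matrix α α ℂ} (hη0 : η 0 = 1)
    (hη : ∀ x ∈ T, ∀ y ∈ T, η x * η y = η (x + y)) (hherm : ∀ x ∈ T, (η x).IsHermitian)
    {ψ : α → ℂ} (hψ : star ψ ⬝ᵥ ψ = 1) :
    ∃ χ : AddChar ι ℂ, ∃ φ : α → ℂ, star φ ⬝ᵥ φ = 1 ∧ (∀ x ∈ T, (χ x • η x) *ᵥ φ = φ) ∧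
      (#T : ℝ)⁻¹ * ∑ x ∈ T, ‖star ψ ⬝ᵥ (η x *ᵥ ψ)‖ ^ 2 ≤ ‖star φ ⬝ᵥ ψ‖ ^ 2 := by
  obtain ⟨χ, hχ⟩ :=
    exists_addChar_sum_norm_sq_le_norm_sq_twirl_mulVec hT0 hT hη0 hη hherm hψ
  have hS : 1 ≤ ∑ x ∈ T, ‖star ψ ⬝ᵥ (η x *ᵥ ψ)‖ ^ 2 := by
    calc (1 : ℝ) = ‖star ψ ⬝ᵥ (η 0 *ᵥ ψ)‖ ^ 2 := by rw [hη0, one_mulVec, hψ, norm_one, one_pow]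
      _ ≤ _ := single_le_sum (f := fun x => ‖star ψ ⬝ᵥ (η x *ᵥ ψ)‖ ^ 2)
          (fun _ _ => by positivity) hT0
  have hT_pos : (0 : ℝ) < #T := by exact_mod_cast card_pos.2 ⟨0, hT0⟩
  obtain ⟨φ, hφ, hPφ, hφψ⟩ := exists_unit_vector_of_isHermitian_of_mul_self_eq
    (twirl_isHermitian hherm χ) (twirl_mul_self hT0 hT hη χ) ψ
    (lt_of_lt_of_le (by positivity) hχ)
  refine ⟨χ, φ, hφ, fun x hx => ?_, hφψ ▸ hχ⟩
  rw [← hPφ, mulVec_mulVec, smul_mul_twirl hT hη hx]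

end Twirl

section Weyl

variable {n : ℕ}

lemma natCast_dotVal (a b : Fin n → ZMod 2) : (dotVal a b : ZMod 2) = a ⬝ᵥ b := by
  simp [dotVal, dotProduct]

lemma Weyl_mul_apply (a b : Fin n → ZMod 2) (M : Matrix (Fin n → ZMod 2) (Fin n → ZMod 2) ℂ)
    (x y : Fin n → ZMod 2) :
    (Weyl n a b * M) x y = I ^ dotVal a b * (-1) ^ dotVal b (a + x) * M (a + x) y := by
  rw [mul_apply, Finset.sum_eq_single (a + x)]
  · rw [Weyl, if_pos (ZModModule.add_eq_iff_eq_add.1 rfl)]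
  · intro z _ hz
    rw [Weyl, if_neg fun h => hz (ZModModule.add_eq_iff_eq_add.2 h).symm, zero_mul]
  · simp

lemma Weyl_zero : Weyl n 0 0 = 1 := by
  ext x y
  simp [Weyl, dotVal, one_apply]

lemma Weyl_mul_self (a b : Fin n → ZMod 2) : Weyl n a b * Weyl n a b = 1 := by
  ext x y
  rw [Weyl_mul_apply, Weyl, one_apply]
  simp only [add_right_inj]
  split_ifs with h
  · subst h
    calc I ^ dotVal a b * (-1) ^ dotVal b (a + x) * (I ^ dotVal a b * (-1) ^ dotVal b x)
        = (-1) ^ (dotVal a b + dotVal b (a + x) + dotVal b x) := by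
          rw [pow_add, pow_add, ← I_pow_mul_self (dotVal a b)]; ring
      _ = 1 := by
          rw [neg_one_pow_eq_of_natCast_eq (k := 0) (by
            push_cast [natCast_dotVal]
            rw [dotProduct_add, dotProduct_comm a b]; ring_nf; reduce_mod_char), pow_zero]
  · rw [mul_zero]

lemma Weyl_conjTranspose (a b : Fin n → ZMod 2) : (Weyl n a b)ᴴ = Weyl n a b := by
  ext x y
  rw [conjTranspose_apply, Weyl, Weyl]
  by_cases h : x = a + y
  · rw [if_pos (ZModModule.add_eq_iff_eq_add.1 h.symm), if_pos h]
    subst h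
    simp only [star_mul', star_pow, star_def, conj_I, map_neg, map_one]
    rw [neg_pow, mul_comm ((-1) ^ _) (I ^ _), mul_assoc, ← pow_add]
    congr 1
    apply neg_one_pow_eq_of_natCast_eq
    push_cast [natCast_dotVal]
    rw [dotProduct_add, dotProduct_comm a b]; ring_nf; reduce_mod_char
  · rw [if_neg fun h' => h (ZModModule.add_eq_iff_eq_add.2 h').symm, if_neg h, star_zero]

lemma Weyl_mul_Weyl_eq_smul (a b c d : Fin n → ZMod 2) :
    ∃ ω : ℂ, Weyl n a b * Weyl n c d = ω • Weyl n (a + c) (b + d) := by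
  refine ⟨I ^ dotVal a b * I ^ dotVal c d * (-1) ^ dotVal b c / I ^ dotVal (a + c) (b + d), ?_⟩
  ext x y
  rw [Weyl_mul_apply, Matrix.smul_apply, Weyl, Weyl, smul_eq_mul]
  have hcond : a + x = c + y ↔ x = a + c + y := by
    rw [ZModModule.add_eq_iff_eq_add, add_assoc]
  by_cases h : x = a + c + y
  · rw [if_pos (hcond.2 h), if_pos h, hcond.2 h]
    have hsign : (-1 : ℂ) ^ dotVal b (c + y) * (-1) ^ dotVal d y
        = (-1) ^ dotVal b c * (-1) ^ dotVal (b + d) y := by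
      rw [← pow_add, ← pow_add]
      apply neg_one_pow_eq_of_natCast_eq
      push_cast [natCast_dotVal]
      rw [dotProduct_add, add_dotProduct]; ring
    field_simp
    linear_combination hsign
  · rw [if_neg (mt hcond.1 h), if_neg h]; simp

lemma commute_Weyl {a b c d : Fin n → ZMod 2} (h : (dotVal a d + dotVal c b) % 2 = 0) :
    Commute (Weyl n a b) (Weyl n c d) := by
  have hiso : a ⬝ᵥ d + c ⬝ᵥ b = 0 := by
    rw [← natCast_dotVal, ← natCast_dotVal, ← Nat.cast_add, ZMod.natCast_eq_zero_iff,
      Nat.dvd_iff_mod_eq_zero]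
    exact h
  ext x y
  rw [Weyl_mul_apply, Weyl_mul_apply, Weyl, Weyl]
  have hcond : a + x = c + y ↔ c + x = a + y := by
    rw [ZModModule.add_eq_iff_eq_add, ZModModule.add_eq_iff_eq_add, ← add_assoc, ← add_assoc,
      add_comm a c]
  by_cases hx : a + x = c + y
  · rw [if_pos hx, if_pos (hcond.1 hx)]
    obtain rfl : x = a + (c + y) := ZModModule.add_eq_iff_eq_add.1 hx
    have hsign : (-1 : ℂ) ^ dotVal b (a + (a + (c + y))) * (-1) ^ dotVal d y
        = (-1) ^ dotVal d (c + (a + (c + y))) * (-1) ^ dotVal b y := by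
      rw [← pow_add, ← pow_add]
      apply neg_one_pow_eq_of_natCast_eq
      push_cast [natCast_dotVal]
      simp only [dotProduct_add]
      rw [dotProduct_comm b c, dotProduct_comm d a]
      linear_combination (norm := (ring_nf; reduce_mod_char)) hiso
    linear_combination I ^ dotVal a b * I ^ dotVal c d * hsign
  · rw [if_neg hx, if_neg (mt hcond.2 hx)]; simp

theorem exists_sign_Weyl_representation (T : Finset ((Fin n → ZMod 2) × (Fin n → ZMod 2)))
    (h0 : 0 ∈ T) (hadd : ∀ x ∈ T, ∀ y ∈ T, x + y ∈ T)
    (hiso : ∀ x ∈ T, ∀ y ∈ T, (dotVal x.1 y.2 + dotVal y.1 x.2) % 2 = 0) :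
    ∃ ε : (Fin n → ZMod 2) × (Fin n → ZMod 2) → ℂ, (∀ x, ε x = 1 ∨ ε x = -1) ∧ ε 0 = 1 ∧
      ∀ x ∈ T, ∀ y ∈ T, (ε x • Weyl n x.1 x.2) * (ε y • Weyl n y.1 y.2) =
        ε (x + y) • Weyl n (x + y).1 (x + y).2 := by
  obtain ⟨v, hv, s, hs, hsv⟩ := exists_common_eigenvector_of_commute_of_mul_self_eq_one
    (K := ℂ) (fun x : (Fin n → ZMod 2) × (Fin n → ZMod 2) => Weyl n x.1 x.2) T
    (fun x _ => Weyl_mul_self x.1 x.2) (fun x hx y hy => commute_Weyl (hiso x hx y hy))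
  have hsq (x) : s x * s x = 1 := mul_self_eq_one_iff.2 (hs x)
  refine ⟨s, hs, smul_left_injective ℂ hv ?_, fun x hx y hy => ?_⟩
  · simpa [Weyl_zero, eq_comm] using hsv 0 h0
  · obtain ⟨ω, hω⟩ := Weyl_mul_Weyl_eq_smul x.1 x.2 y.1 y.2
    exact smul_mul_smul_eq_smul_of_mulVec_eq hω hv (hsv x hx) (hsv y hy)
      (hsv (x + y) (hadd x hx y hy)) (hsq x) (hsq y) (hsq (x + y))

lemma isStabilizerState_of_mulVec_eq {φ : (Fin n → ZMod 2) → ℂ} (hφ : star φ ⬝ᵥ φ = 1)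
    {T : Finset ((Fin n → ZMod 2) × (Fin n → ZMod 2))} (hcard : #T = 2 ^ n) (h0 : 0 ∈ T)
    (hadd : ∀ x ∈ T, ∀ y ∈ T, x + y ∈ T)
    (hiso : ∀ x ∈ T, ∀ y ∈ T, (dotVal x.1 y.2 + dotVal y.1 x.2) % 2 = 0)
    {ε : (Fin n → ZMod 2) × (Fin n → ZMod 2) → ℂ} (hε : ∀ x, ε x = 1 ∨ ε x = -1)
    (hεW : ∀ x ∈ T, ∀ y ∈ T, (ε x • Weyl n x.1 x.2) * (ε y • Weyl n y.1 y.2) =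
      ε (x + y) • Weyl n (x + y).1 (x + y).2)
    (χ : AddChar ((Fin n → ZMod 2) × (Fin n → ZMod 2)) ℂ)
    (hfix : ∀ x ∈ T, (χ x • ε x • Weyl n x.1 x.2) *ᵥ φ = φ) :
    IsStabilizerState n φ := by
  refine ⟨?_, T, fun x => χ x * ε x, hcard, h0, hadd, hiso, fun x => ?_, fun x hx y hy => ?_,
    fun x hx => by rw [mul_smul]; exact hfix x hx⟩
  · exact_mod_cast (star_dotProduct_self_eq_sum_norm_sq φ).symm.trans hφ
  · refine mul_self_eq_one_iff.1 ?_
    rw [mul_mul_mul_comm, AddChar.mul_self_apply_of_zmodModule, mul_self_eq_one_iff.2 (hε x),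
      one_mul]
  · calc (χ (x + y) * ε (x + y)) • Weyl n (x + y).1 (x + y).2
        = (χ x * χ y) • (ε (x + y) • Weyl n (x + y).1 (x + y).2) := by
          rw [AddChar.map_add_eq_mul, smul_smul]
      _ = (χ x * χ y) • ((ε x • Weyl n x.1 x.2) * (ε y • Weyl n y.1 y.2)) := by
          rw [hεW x hx y hy]
      _ = (χ x * ε x * (χ y * ε y)) • (Weyl n x.1 x.2 * Weyl n y.1 y.2) := by
          rw [smul_mul_smul_comm, smul_smul, mul_mul_mul_comm]

end Weyl

/-- For any unit vector `ψ` and Lagrangian subspace `T`, the stabilizer fidelity of `ψ`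
is at least `∑_{x ∈ T} p_Ψ(x)` where `p_Ψ(x) = 2^{-n} |⟨ψ|W_x|ψ⟩|²`. -/
theorem stabilizer_fidelity_lower_bound (n : ℕ) (ψ : (Fin n → ZMod 2) → ℂ)
    (hψ : ∑ x, ‖ψ x‖ ^ 2 = 1)
    (T : Finset ((Fin n → ZMod 2) × (Fin n → ZMod 2)))
    (hcard : T.card = 2 ^ n)
    (h0 : (0 : (Fin n → ZMod 2) × (Fin n → ZMod 2)) ∈ T)
    (hadd : ∀ x ∈ T, ∀ y ∈ T, x + y ∈ T)
    (hiso : ∀ x ∈ T, ∀ y ∈ T, (dotVal x.1 y.2 + dotVal y.1 x.2) % 2 = 0) :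
    ∃ φ : (Fin n → ZMod 2) → ℂ, IsStabilizerState n φ ∧
      ∑ x ∈ T, ((2 : ℝ) ^ n)⁻¹ *
          ‖(Weyl n x.1 x.2 * Matrix.vecMulVec ψ (star ψ)).trace‖ ^ 2
        ≤ ‖∑ v, (starRingEnd ℂ) (φ v) * ψ v‖ ^ 2 := by
  obtain ⟨ε, hε, hε0, hεW⟩ := exists_sign_Weyl_representation T h0 hadd hiso
  have hherm (x) : (ε x • Weyl n x.1 x.2).IsHermitian := by
    rcases hε x with h | h <;> simp [h, IsHermitian, Weyl_conjTranspose]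
  obtain ⟨χ, φ, hφ, hfix, hbound⟩ := exists_addChar_fixed_unit_vector_sum_norm_sq_le h0 hadd
    (by rw [hε0, one_smul]; exact Weyl_zero) hεW (fun x _ => hherm x)
    (by rw [star_dotProduct_self_eq_sum_norm_sq, hψ, ofReal_one])
  refine ⟨φ, isStabilizerState_of_mulVec_eq hφ hcard h0 hadd hiso hε hεW χ hfix, ?_⟩
  calc ∑ x ∈ T, ((2 : ℝ) ^ n)⁻¹ * ‖(Weyl n x.1 x.2 * vecMulVec ψ (star ψ)).trace‖ ^ 2
      = (#T : ℝ)⁻¹ * ∑ x ∈ T, ‖star ψ ⬝ᵥ ((ε x • Weyl n x.1 x.2) *ᵥ ψ)‖ ^ 2 := by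
        rw [mul_sum, hcard, Nat.cast_pow, Nat.cast_ofNat]
        refine sum_congr rfl fun x _ => ?_
        have hεx : ‖ε x‖ = 1 := by rcases hε x with h | h <;> simp [h]
        rw [trace_mul_vecMulVec, smul_mulVec, dotProduct_smul, smul_eq_mul, norm_mul, hεx,
          one_mul]
    _ ≤ ‖star φ ⬝ᵥ ψ‖ ^ 2 := hbound
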